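/- arXiv:1205.7036 — 2 statements merged into one kernel-verified Lean document; each statement's English description precedes it below -/
import Mathlib

section
/- Let H be a matrix over F₂ with columns indexed by Fin n × Fin 2 and define Φ : (Fin n → ℝ) → ℝ by Φ(x) = Σ_{E ⊆ Fin n} rank(H_E) · (∏_{i ∈ E} x_i) · (∏_{i ∉ E} (1 − x_i)). Then for every x ∈ [0,1]^n and all indices i, j ∈ Fin n: the partial derivative ∂Φ/∂x_i at x (the derivative at x_i of the function t ↦ Φ(Function.update x i t)) is nonnegative, and the mixed second partial derivative ∂²Φ/(∂x_i ∂x_j) at x is nonpositive. -/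
open Finset

/-- The matrix `H_E`: columns of qubits outside `E` are replaced by zero (this does not
change the rank, so `(erased H E).rank` is the rank of the submatrix `H_E`). -/
def erased {r n : ℕ} (H : Matrix (Fin r) (Fin n × Fin 2) (ZMod 2)) (E : Finset (Fin n)) :
    Matrix (Fin r) (Fin n × Fin 2) (ZMod 2) :=
  Matrix.of fun a p => if p.1 ∈ E then H a p else 0

/-- `Φ(x) = Σ_E rank(H_E) · ∏_{i∈E} x_i · ∏_{i∉E} (1−x_i)`, the expected rank when
coordinate `i` is erased independently with probability `x_i`. -/
noncomputable def Phi {r n : ℕ} (H : Matrix (Fin r) (Fin n × Fin 2) (ZMod 2))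
    (x : Fin n → ℝ) : ℝ :=
  ∑ E : Finset (Fin n), ((erased H E).rank : ℝ) *
    (∏ i ∈ E, x i) * (∏ i ∈ Eᶜ, (1 - x i))

/-- The partial derivative of `f` with respect to the `i`-th coordinate at `x`. -/
noncomputable def pd {n : ℕ} (f : (Fin n → ℝ) → ℝ) (i : Fin n) (x : Fin n → ℝ) : ℝ :=
  deriv (fun t : ℝ => f (Function.update x i t)) (x i)

/-- `φ(p) = (1/n)·Σ_E rank(H_E)·p^|E|·(1−p)^(n−|E|)`, the normalized expected rank of
the erased submatrix. -/
noncomputable def phi {r n : ℕ} (H : Matrix (Fin r) (Fin n × Fin 2) (ZMod 2)) (p : ℝ) : ℝ :=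
  (1 / n : ℝ) * ∑ E : Finset (Fin n),
    ((erased H E).rank : ℝ) * p ^ E.card * (1 - p) ^ (n - E.card)

/-!
`Phi H` is the multilinear extension of the set function `E ↦ rank H_E`. Differentiating a
multilinear extension in `x_i` gives the multilinear extension of the discrete derivative
`E ↦ f (E ∪ {i}) - f (E \ {i})`, and a multilinear extension of a nonnegative (nonpositive)
function is nonnegative (nonpositive) on `[0,1]^n`. The rank of a set of columns is monotone,
and submodular by `dim (U ⊔ W) + dim (U ⊓ W) = dim U + dim W`; so first discrete derivatives of
the rank are nonnegative and second ones nonpositive.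
-/

open Function Matrix

section MultilinearExtension

variable {ι : Type*} [DecidableEq ι]

/-- Symmetric in the membership of `i`, so that `discreteDeriv i f` does not depend on whether
`i ∈ E`; this is what makes `pd_multilinearExtension` hold on the nose. -/
def discreteDeriv (i : ι) (f : Finset ι → ℝ) (E : Finset ι) : ℝ :=
  f (insert i E) - f (E.erase i)

lemma discreteDeriv_nonneg {f : Finset ι → ℝ} (hf : Monotone f) (i : ι) :
    0 ≤ discreteDeriv i f :=
  fun E => sub_nonneg.mpr (hf ((erase_subset i E).trans (subset_insert i E)))

lemma discreteDeriv_discreteDeriv_nonpos {f : Finset ι → ℝ}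
    (hf : ∀ A B, f (A ∪ B) + f (A ∩ B) ≤ f A + f B) (i j : ι) :
    discreteDeriv j (discreteDeriv i f) ≤ 0 := by
  intro E
  by_cases hij : i = j
  · subst hij
    have : insert i (E.erase i) = insert i E := by
      ext k; simp only [mem_insert, mem_erase]; grind
    simp [discreteDeriv, this]
  have hunion : insert i (E.erase j) ∪ insert j (E.erase i) = insert i (insert j E) := by
    ext k; simp only [mem_union, mem_insert, mem_erase]; grind
  have hinter : insert i (E.erase j) ∩ insert j (E.erase i) = (E.erase j).erase i := by
    ext k; simp only [mem_inter, mem_insert, mem_erase]; grind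
  have := hf (insert i (E.erase j)) (insert j (E.erase i))
  rw [hunion, hinter] at this
  simp only [discreteDeriv, Pi.zero_apply, erase_insert_of_ne (Ne.symm hij)]
  linarith

variable [Fintype ι]

noncomputable def multilinearExtension (f : Finset ι → ℝ) (x : ι → ℝ) : ℝ :=
  ∑ E, f E * (∏ k ∈ E, x k) * (∏ k ∈ Eᶜ, (1 - x k))

lemma sum_eq_sum_filter_notMem_insert_add {M : Type*} [AddCommMonoid M] (i : ι)
    (g : Finset ι → M) : ∑ E, g E = ∑ E with i ∉ E, (g (insert i E) + g E) := by
  rw [sum_add_distrib, ← sum_filter_add_sum_filter_not univ (i ∈ ·)]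
  congr 1
  refine sum_nbij' (·.erase i) (insert i) ?_ ?_ ?_ ?_ ?_ <;>
    simp +contextual [insert_erase]

lemma multilinearExtension_eq_sum_filter_notMem (f : Finset ι → ℝ) (x : ι → ℝ) (i : ι) :
    multilinearExtension f x = ∑ E with i ∉ E,
      (x i * f (insert i E) + (1 - x i) * f E) *
        ((∏ k ∈ E, x k) * ∏ k ∈ Eᶜ.erase i, (1 - x k)) := by
  rw [multilinearExtension, sum_eq_sum_filter_notMem_insert_add i]
  refine sum_congr rfl fun E hE => ?_
  have hi : i ∉ E := (mem_filter.mp hE).2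
  rw [prod_insert hi, compl_insert, ← mul_prod_erase Eᶜ (fun k => 1 - x k) (mem_compl.mpr hi)]
  ring

lemma multilinearExtension_update (f : Finset ι → ℝ) (x : ι → ℝ) (i : ι) (t : ℝ) :
    multilinearExtension f (update x i t) =
      multilinearExtension (fun E => f (E.erase i)) x +
        t * multilinearExtension (discreteDeriv i f) x := by
  simp only [multilinearExtension_eq_sum_filter_notMem _ _ i, mul_sum, ← sum_add_distrib]
  refine sum_congr rfl fun E hE => ?_
  have hi : i ∉ E := (mem_filter.mp hE).2
  have hrest : ∏ k ∈ Eᶜ.erase i, (1 - update x i t k) = ∏ k ∈ Eᶜ.erase i, (1 - x k) :=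
    prod_congr rfl fun k hk => by rw [update_of_ne (ne_of_mem_erase hk)]
  simp only [prod_update_of_notMem hi, update_self, hrest, discreteDeriv, erase_insert hi,
    erase_eq_of_notMem hi, insert_idem]
  ring

lemma hasDerivAt_multilinearExtension_update (f : Finset ι → ℝ) (x : ι → ℝ) (i : ι) (t : ℝ) :
    HasDerivAt (fun s => multilinearExtension f (update x i s))
      (multilinearExtension (discreteDeriv i f) x) t := by
  simp_rw [multilinearExtension_update]
  exact (hasDerivAt_mul_const _).const_add _

lemma multilinearExtension_mono {f g : Finset ι → ℝ} (hfg : f ≤ g) {x : ι → ℝ}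
    (hx : ∀ i, x i ∈ Set.Icc (0 : ℝ) 1) :
    multilinearExtension f x ≤ multilinearExtension g x := by
  refine sum_le_sum fun E _ => ?_
  have hE : 0 ≤ ∏ k ∈ E, x k := prod_nonneg fun k _ => (hx k).1
  have hEc : 0 ≤ ∏ k ∈ Eᶜ, (1 - x k) := prod_nonneg fun k _ => sub_nonneg.mpr (hx k).2
  gcongr
  exact hfg E

lemma multilinearExtension_nonneg {f : Finset ι → ℝ} (hf : 0 ≤ f) {x : ι → ℝ}
    (hx : ∀ i, x i ∈ Set.Icc (0 : ℝ) 1) : 0 ≤ multilinearExtension f x := by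
  simpa [multilinearExtension] using multilinearExtension_mono hf hx

lemma multilinearExtension_nonpos {f : Finset ι → ℝ} (hf : f ≤ 0) {x : ι → ℝ}
    (hx : ∀ i, x i ∈ Set.Icc (0 : ℝ) 1) : multilinearExtension f x ≤ 0 := by
  simpa [multilinearExtension] using multilinearExtension_mono hf hx

end MultilinearExtension

lemma pd_multilinearExtension {n : ℕ} (f : Finset (Fin n) → ℝ) (i : Fin n) (x : Fin n → ℝ) :
    pd (multilinearExtension f) i x = multilinearExtension (discreteDeriv i f) x :=
  (hasDerivAt_multilinearExtension_update f x i (x i)).deriv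

section FinrankSpan

variable {K V κ : Type*} [Field K] [AddCommGroup V] [Module K V] [FiniteDimensional K V]
  (v : κ → V)

lemma finrank_span_image_mono {s t : Set κ} (h : s ⊆ t) :
    Module.finrank K (Submodule.span K (v '' s)) ≤ Module.finrank K (Submodule.span K (v '' t)) :=
  Submodule.finrank_mono (Submodule.span_mono (Set.image_mono h))

lemma finrank_span_image_union_add_inter_le (s t : Set κ) :
    Module.finrank K (Submodule.span K (v '' (s ∪ t))) +
        Module.finrank K (Submodule.span K (v '' (s ∩ t))) ≤
      Module.finrank K (Submodule.span K (v '' s)) +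
        Module.finrank K (Submodule.span K (v '' t)) := by
  have hinter : Submodule.span K (v '' (s ∩ t)) ≤
      Submodule.span K (v '' s) ⊓ Submodule.span K (v '' t) :=
    le_inf (Submodule.span_mono (Set.image_mono Set.inter_subset_left))
      (Submodule.span_mono (Set.image_mono Set.inter_subset_right))
  rw [Set.image_union, Submodule.span_union]
  calc _ ≤ Module.finrank K ↥(Submodule.span K (v '' s) ⊔ Submodule.span K (v '' t)) +
        Module.finrank K ↥(Submodule.span K (v '' s) ⊓ Submodule.span K (v '' t)) := by
        gcongr
        exact Submodule.finrank_mono hinter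
    _ = _ := Submodule.finrank_sup_add_finrank_inf_eq _ _

end FinrankSpan

lemma span_cols_erased {r n : ℕ} (H : Matrix (Fin r) (Fin n × Fin 2) (ZMod 2))
    (E : Finset (Fin n)) :
    Submodule.span (ZMod 2) (Set.range (erased H E).col) =
      Submodule.span (ZMod 2) (H.col '' (Prod.fst ⁻¹' (E : Set (Fin n)))) := by
  have hcol : ∀ p, (erased H E).col p = if p.1 ∈ E then H.col p else 0 := fun p => by
    ext a; by_cases hp : p.1 ∈ E <;> simp [erased, hp]
  apply le_antisymm
  · rw [Submodule.span_le]
    rintro _ ⟨p, rfl⟩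
    rw [hcol]
    split_ifs with hp
    · exact Submodule.subset_span ⟨p, hp, rfl⟩
    · exact zero_mem _
  · refine Submodule.span_mono ?_
    rintro _ ⟨p, hp : p.1 ∈ E, rfl⟩
    exact ⟨p, by rw [hcol, if_pos hp]⟩

lemma rank_erased_eq_finrank_span {r n : ℕ} (H : Matrix (Fin r) (Fin n × Fin 2) (ZMod 2))
    (E : Finset (Fin n)) :
    (erased H E).rank =
      Module.finrank (ZMod 2) (Submodule.span (ZMod 2) (H.col '' (Prod.fst ⁻¹' (E : Set (Fin n))))) := by
  rw [rank_eq_finrank_span_cols, span_cols_erased]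

lemma monotone_rank_erased {r n : ℕ} (H : Matrix (Fin r) (Fin n × Fin 2) (ZMod 2)) :
    Monotone fun E => (erased H E).rank := fun E F h => by
  simp only [rank_erased_eq_finrank_span]
  exact finrank_span_image_mono _ (Set.preimage_mono (coe_subset.mpr h))

lemma rank_erased_union_add_inter_le {r n : ℕ} (H : Matrix (Fin r) (Fin n × Fin 2) (ZMod 2))
    (A B : Finset (Fin n)) :
    (erased H (A ∪ B)).rank + (erased H (A ∩ B)).rank ≤ (erased H A).rank + (erased H B).rank := by
  simp only [rank_erased_eq_finrank_span]
  rw [coe_union, coe_inter, Set.preimage_union, Set.preimage_inter]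
  exact finrank_span_image_union_add_inter_le _ _ _

theorem expected_rank_partial_derivatives
    {r n : ℕ} (H : Matrix (Fin r) (Fin n × Fin 2) (ZMod 2))
    (x : Fin n → ℝ) (hx : ∀ i, x i ∈ Set.Icc (0 : ℝ) 1) (i j : Fin n) :
    0 ≤ pd (Phi H) i x ∧ pd (fun y => pd (Phi H) i y) j x ≤ 0 := by
  set rk : Finset (Fin n) → ℝ := fun E => (erased H E).rank
  have hPhi : Phi H = multilinearExtension rk := rfl
  have hmono : Monotone rk := fun E F h => Nat.cast_le.mpr (monotone_rank_erased H h)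
  have hsubmod : ∀ A B, rk (A ∪ B) + rk (A ∩ B) ≤ rk A + rk B := fun A B => by
    dsimp only [rk]
    exact_mod_cast rank_erased_union_add_inter_le H A B
  have hpd : (fun y => pd (Phi H) i y) = multilinearExtension (discreteDeriv i rk) :=
    funext fun y => by rw [hPhi, pd_multilinearExtension]
  rw [hpd, pd_multilinearExtension, hPhi, pd_multilinearExtension]
  exact ⟨multilinearExtension_nonneg (discreteDeriv_nonneg hmono i) hx,
    multilinearExtension_nonpos (discreteDeriv_discreteDeriv_nonpos hsubmod i j) hx⟩
end

section
/- Let n ≥ 1 and let H be a matrix over F₂ with columns indexed by Fin n × Fin 2. The function φ : ℝ → ℝ, φ(p) = (1/n)·Σ_{E ⊆ Fin n} rank(H_E) · p^|E| · (1−p)^(n−|E|), is concave on the interval [0,1]. -/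
open Finset

/-!
Write `c(E) = rank H_E`, so that `φ(p) = (1/n)·E[c(E)]` for a `p`-random subset `E`.
Differentiating under the sum twice, `φ''(p)` is a nonnegative combination of the second
differences `c(F ∪ {i,j}) - c(F ∪ {i}) - c(F ∪ {j}) + c(F)` with `i ≠ j`. These are
nonpositive because `c` is submodular: `c(E)` is the dimension of the span `U_E` of the columns
indexed by `E`, with `U_{A ∪ B} = U_A + U_B` and `U_{A ∩ B} ≤ U_A ∩ U_B`, and
`dim (U + W) + dim (U ∩ W) = dim U + dim W`.
-/

section SetFunction

variable {ι : Type*} [DecidableEq ι]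

def IsSubmodular (c : Finset ι → ℝ) : Prop :=
  ∀ A B, c (A ∪ B) + c (A ∩ B) ≤ c A + c B

def marginal (c : Finset ι → ℝ) (i : ι) (F : Finset ι) : ℝ :=
  c (insert i F) - c F

theorem IsSubmodular.marginal_marginal_nonpos {c : Finset ι → ℝ} (hc : IsSubmodular c)
    {i j : ι} (hij : i ≠ j) (F : Finset ι) : marginal (marginal c i) j F ≤ 0 := by
  have hunion : insert i F ∪ insert j F = insert i (insert j F) := by grind
  have hinter : insert i F ∩ insert j F = F := by grind
  have := hc (insert i F) (insert j F)
  rw [hunion, hinter] at this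
  simp only [marginal]
  linarith

noncomputable def bernoulliMean (s : Finset ι) (c : Finset ι → ℝ) (p : ℝ) : ℝ :=
  ∑ E ∈ s.powerset, c E * ∏ i ∈ s, if i ∈ E then p else 1 - p

theorem bernoulliMean_eq_sum_pow (s : Finset ι) (c : Finset ι → ℝ) (p : ℝ) :
    bernoulliMean s c p = ∑ E ∈ s.powerset, c E * p ^ #E * (1 - p) ^ (#s - #E) := by
  refine sum_congr rfl fun E hE => ?_
  have hEs : E ⊆ s := mem_powerset.1 hE
  rw [prod_ite, filter_mem_eq_inter, inter_eq_right.2 hEs, filter_not, filter_mem_eq_inter,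
    inter_eq_right.2 hEs, prod_const, prod_const, card_sdiff_of_subset hEs, mul_assoc]

theorem hasDerivAt_prod_ite_mem (s E : Finset ι) (p : ℝ) :
    HasDerivAt (fun q => ∏ i ∈ s, if i ∈ E then q else 1 - q)
      (∑ i ∈ s, (∏ j ∈ s.erase i, if j ∈ E then p else 1 - p) * if i ∈ E then 1 else -1) p := by
  have hfactor (i : ι) : HasDerivAt (fun q : ℝ => if i ∈ E then q else 1 - q)
      (if i ∈ E then 1 else -1) p := by
    split_ifs
    · exact hasDerivAt_id p
    · simpa using (hasDerivAt_id p).const_sub 1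
  simpa only [smul_eq_mul] using HasDerivAt.fun_finsetProd fun i _ => hfactor i

/-- The left-hand side is the `i`-th partial derivative of the multilinear extension of `c`
on the diagonal. -/
theorem sum_powerset_mul_ite_eq_bernoulliMean_marginal {i : ι} {s : Finset ι} (hi : i ∈ s)
    (c : Finset ι → ℝ) (p : ℝ) :
    ∑ E ∈ s.powerset, c E *
        ((∏ j ∈ s.erase i, if j ∈ E then p else 1 - p) * if i ∈ E then 1 else -1) =
      bernoulliMean (s.erase i) (marginal c i) p := by
  obtain ⟨t, hit, rfl⟩ : ∃ t, i ∉ t ∧ insert i t = s :=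
    ⟨s.erase i, notMem_erase _ _, insert_erase hi⟩
  have hweight (F : Finset ι) :
      (∏ j ∈ t, if j ∈ insert i F then p else 1 - p) = ∏ j ∈ t, if j ∈ F then p else 1 - p :=
    prod_congr rfl fun j hj => by simp only [mem_insert, ne_of_mem_of_not_mem hj hit, false_or]
  rw [sum_powerset_insert hit, erase_insert hit, bernoulliMean, ← sum_add_distrib]
  refine sum_congr rfl fun F hF => ?_
  have hiF : i ∉ F := fun h => hit (mem_powerset.1 hF h)
  rw [hweight, if_neg hiF, if_pos (mem_insert_self i F), marginal]
  ring

theorem hasDerivAt_bernoulliMean (s : Finset ι) (c : Finset ι → ℝ) (p : ℝ) :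
    HasDerivAt (bernoulliMean s c)
      (∑ i ∈ s, bernoulliMean (s.erase i) (marginal c i) p) p := by
  have hsum := HasDerivAt.fun_sum fun E (_ : E ∈ s.powerset) =>
    (hasDerivAt_prod_ite_mem s E p).const_mul (c E)
  simp_rw [mul_sum] at hsum
  rwa [sum_comm, sum_congr rfl fun i hi => sum_powerset_mul_ite_eq_bernoulliMean_marginal hi c p]
    at hsum

theorem bernoulliMean_nonpos {s : Finset ι} {c : Finset ι → ℝ} (hc : ∀ F ⊆ s, c F ≤ 0)
    {p : ℝ} (hp : p ∈ Set.Icc (0 : ℝ) 1) : bernoulliMean s c p ≤ 0 := by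
  refine sum_nonpos fun E hE => mul_nonpos_of_nonpos_of_nonneg (hc E (mem_powerset.1 hE)) ?_
  refine prod_nonneg fun i _ => ?_
  split_ifs
  · exact hp.1
  · exact sub_nonneg.2 hp.2

theorem IsSubmodular.concaveOn_bernoulliMean {c : Finset ι → ℝ} (hc : IsSubmodular c)
    (s : Finset ι) : ConcaveOn ℝ (Set.Icc 0 1) (bernoulliMean s c) := by
  have hderiv := hasDerivAt_bernoulliMean s c
  have hderiv2 (p : ℝ) := HasDerivAt.fun_sum fun i (_ : i ∈ s) =>
    hasDerivAt_bernoulliMean (s.erase i) (marginal c i) p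
  refine concaveOn_of_hasDerivWithinAt2_nonpos (convex_Icc 0 1)
    (fun p _ => (hderiv p).continuousAt.continuousWithinAt)
    (fun p _ => (hderiv p).hasDerivWithinAt) (fun p _ => (hderiv2 p).hasDerivWithinAt)
    fun p hp => ?_
  refine sum_nonpos fun i _ => sum_nonpos fun j hj => ?_
  exact bernoulliMean_nonpos (fun F _ => hc.marginal_marginal_nonpos (ne_of_mem_erase hj).symm F)
    (interior_subset hp)

end SetFunction

theorem isSubmodular_finrank_span_image_preimage {K V κ ι : Type*} [DecidableEq ι]
    [DivisionRing K] [AddCommGroup V] [Module K V] [FiniteDimensional K V]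
    (v : κ → V) (π : κ → ι) :
    IsSubmodular fun E : Finset ι =>
      (Module.finrank K (Submodule.span K (v '' (π ⁻¹' E))) : ℝ) := by
  intro A B
  set U : Finset ι → Submodule K V := fun E => Submodule.span K (v '' (π ⁻¹' E))
  have hunion : U (A ∪ B) = U A ⊔ U B := by
    simp only [U, coe_union, Set.preimage_union, Set.image_union, Submodule.span_union]
  have hinter : U (A ∩ B) ≤ U A ⊓ U B := by
    simp only [U, coe_inter, Set.preimage_inter]
    exact le_inf (Submodule.span_mono (Set.image_mono Set.inter_subset_left))
      (Submodule.span_mono (Set.image_mono Set.inter_subset_right))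
  have hmodular := Submodule.finrank_sup_add_finrank_inf_eq (U A) (U B)
  have hmono := Submodule.finrank_mono hinter
  change (Module.finrank K (U (A ∪ B)) : ℝ) + Module.finrank K (U (A ∩ B)) ≤
    Module.finrank K (U A) + Module.finrank K (U B)
  rw [hunion]
  exact_mod_cast hmodular ▸ Nat.add_le_add_left hmono _

theorem rank_erased {r n : ℕ} (H : Matrix (Fin r) (Fin n × Fin 2) (ZMod 2))
    (E : Finset (Fin n)) :
    (erased H E).rank =
      Module.finrank (ZMod 2) (Submodule.span (ZMod 2) (H.col '' (Prod.fst ⁻¹' E))) := by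
  have hcol (q : Fin n × Fin 2) : (erased H E).col q = if q.1 ∈ E then H.col q else 0 := by
    ext a
    by_cases hq : q.1 ∈ E <;> simp [erased, Matrix.col_apply, hq]
  have hspan : Submodule.span (ZMod 2) (Set.range (erased H E).col) =
      Submodule.span (ZMod 2) (H.col '' (Prod.fst ⁻¹' E)) := by
    apply le_antisymm <;> rw [Submodule.span_le]
    · rintro _ ⟨q, rfl⟩
      rw [hcol]
      split_ifs with hq
      · exact Submodule.subset_span ⟨q, hq, rfl⟩
      · exact zero_mem _
    · rintro _ ⟨q, hq, rfl⟩
      exact Submodule.subset_span ⟨q, (hcol q).trans (if_pos hq)⟩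
  rw [Matrix.rank_eq_finrank_span_cols, hspan]

theorem expected_rank_concave_general
    {r n : ℕ} (H : Matrix (Fin r) (Fin n × Fin 2) (ZMod 2)) :
    ConcaveOn ℝ (Set.Icc (0 : ℝ) 1) (phi H) := by
  have hphi : phi H =
      fun p => (1 / n : ℝ) * bernoulliMean univ (fun E => ((erased H E).rank : ℝ)) p := by
    ext p
    rw [phi, bernoulliMean_eq_sum_pow, powerset_univ, card_univ, Fintype.card_fin]
  have hrank : IsSubmodular fun E : Finset (Fin n) => ((erased H E).rank : ℝ) := by
    simpa only [rank_erased] using isSubmodular_finrank_span_image_preimage H.col Prod.fst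
  rw [hphi]
  exact (hrank.concaveOn_bernoulliMean univ).smul (by positivity)

theorem expected_rank_concave
    {r n : ℕ} (hn : 1 ≤ n) (H : Matrix (Fin r) (Fin n × Fin 2) (ZMod 2)) :
    ConcaveOn ℝ (Set.Icc (0 : ℝ) 1) (phi H) :=
  expected_rank_concave_general H
end
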